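/- Let Σ be a finite alphabet, n ≥ 1 an integer, Y ⊆ T(Σ), and Ŷ = {y + s | y ∈ Y, s ≥ 0}. Let u be a nonempty timed word over Σ with first timestamp τ_1(u) and let t be a real with 0 ≤ t < τ_1(u). If (u − t) · T(Σ) ∩ T^n(Σ) · Ŷ · T(Σ) = ∅, then u · T(Σ) ∩ T^n(Σ) · Ŷ · T(Σ) = ∅. -/

import Mathlib

open scoped Classical NNRat

namespace PTPM

/-- Timed words over an alphabet `α`: finite sequences of (letter, timestamp). -/
abbrev TWord (α : Type*) := List (α × ℝ)

/-- Well-formedness of a timed word: positive, strictly increasing timestamps. -/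
def IsTW {α : Type*} (w : TWord α) : Prop :=
  (∀ p ∈ w, 0 < p.2) ∧ w.Chain' (fun p q => p.2 < q.2)

/-- `T(Σ)`: the set of timed words over `α`. -/
def TW (α : Type*) : Set (TWord α) := {w | IsTW w}

/-- `T^n(Σ)`: the set of timed words over `α` of length `n`. -/
def TWn (α : Type*) (n : ℕ) : Set (TWord α) := {w | IsTW w ∧ w.length = n}

/-- The shift `w + s` of a timed word. -/
def shift {α : Type*} (w : TWord α) (s : ℝ) : TWord α := w.map fun p => (p.1, p.2 + s)

/-- Last timestamp of a timed word (`0` for the empty word). -/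
def lastT {α : Type*} (w : TWord α) : ℝ := (w.getLast?.map Prod.snd).getD 0

/-- Non-absorbing concatenation `w · w'`. -/
def ncat {α : Type*} (w w' : TWord α) : TWord α := w ++ shift w' (lastT w)

/-- Non-absorbing concatenation lifted to sets of timed words. -/
def ncatS {α : Type*} (W W' : Set (TWord α)) : Set (TWord α) :=
  {u | ∃ w ∈ W, ∃ w' ∈ W', u = ncat w w'}

/-- `τ_k`, the `k`-th timestamp (1-indexed), with `τ_0 = 0`. -/
def tau {α : Type*} (w : TWord α) (k : ℕ) : ℝ := lastT (w.take k)

/-- The subsequence `w(i,j)` (1-indexed, both inclusive; empty if `i > j`). -/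
def sub {α : Type*} (w : TWord α) (i j : ℕ) : TWord α := (w.take j).drop (i - 1)

/-- Letter at position `k` (1-indexed), if any. -/
def letterAt {α : Type*} (w : TWord α) (k : ℕ) : Option α := w[k - 1]?.map Prod.fst

/-- Embedding of timed words over `Σ` into timed words over `Σ ⊔ {$}`;
the terminal character `$` is modelled by `none`. -/
def liftW {α : Type*} (w : TWord α) : TWord (Option α) := w.map fun p => (some p.1, p.2)

/-- `T(Σ)` viewed inside the alphabet `Σ ⊔ {$}`. -/
def TWl (α : Type*) : Set (TWord (Option α)) := liftW '' TW α

/-- `T^n(Σ)` viewed inside the alphabet `Σ ⊔ {$}`. -/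
def TWln (α : Type*) (n : ℕ) : Set (TWord (Option α)) := liftW '' TWn α n

/-- The segment `w|_(t,t')`, a timed word over `Σ ⊔ {$}`. -/
noncomputable def seg {α : Type*} (w : TWord α) (t t' : ℝ) : TWord (Option α) :=
  (w.filter fun p => decide (t < p.2 ∧ p.2 < t')).map
      (fun p => ((some p.1 : Option α), p.2 - t))
    ++ [((none : Option α), t' - t)]

/-- `L_{-$}`: the words of `L` with the last element removed. -/
def minusDollar {β : Type*} (L : Set (TWord β)) : Set (TWord β) :=
  {u | ∃ x ∈ L, x ≠ [] ∧ u = x.dropLast}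

/-- Untimed projection of a timed word. -/
def untimed {α : Type*} (w : TWord α) : List α := w.map Prod.fst

/-- Untimed projection of a set of timed words. -/
def untimedS {α : Type*} (W : Set (TWord α)) : Set (List α) := untimed '' W

/-- `U · Σ*`: the set of finite words having a prefix in `U`. -/
def prefSet {σ : Type*} (U : Set (List σ)) : Set (List σ) := {x | ∃ u ∈ U, ∃ s, x = u ++ s}

/-- `Ŷ = {y + s | y ∈ Y, s ≥ 0}`. -/
def hatS {α : Type*} (Y : Set (TWord α)) : Set (TWord α) :=
  {u | ∃ y ∈ Y, ∃ s : ℝ, 0 ≤ s ∧ u = shift y s}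

/-- Comparison operators `⋈ ∈ {<, ≤, =, ≥, >}`. -/
inductive Cmp | lt | le | eq | ge | gt

def Cmp.eval : Cmp → ℝ → ℝ → Prop
  | .lt, a, b => a < b
  | .le, a, b => a ≤ b
  | .eq, a, b => a = b
  | .ge, a, b => b ≤ a
  | .gt, a, b => b < a

/-- Atomic guard constraints `x ⋈ d` (`d ∈ ℕ`) and `x ⋈ p` (`p` a parameter). -/
inductive Atom (C P : Type*)
  | nat (x : C) (op : Cmp) (d : ℕ)
  | par (x : C) (op : Cmp) (p : P)

/-- A guard: a finite conjunction of atomic constraints. -/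
abbrev Guard (C P : Type*) := List (Atom C P)

def Atom.sat {C P : Type*} (μ : C → ℝ) (v : P → ℚ≥0) : Atom C P → Prop
  | .nat x op d => op.eval (μ x) (d : ℝ)
  | .par x op p => op.eval (μ x) ((v p : ℚ) : ℝ)

/-- `μ ⊨ v(g)`. -/
def Guard.sat {C P : Type*} (μ : C → ℝ) (v : P → ℚ≥0) (g : Guard C P) : Prop :=
  ∀ a ∈ g, a.sat μ v

def Atom.mapCP {C P C' P' : Type*} (fc : C → C') (fp : P → P') : Atom C P → Atom C' P'
  | .nat x op d => .nat (fc x) op d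
  | .par x op p => .par (fc x) op (fp p)

def Guard.mapCP {C P C' P' : Type*} (fc : C → C') (fp : P → P') (g : Guard C P) :
    Guard C' P' :=
  g.map (Atom.mapCP fc fp)

/-- Parametric timed automaton with alphabet `α`, locations `L`, clocks `C`, parameters `P`.
An edge `(ℓ, g, a, R, ℓ')` has source `ℓ`, guard `g`, action `a`, resets `R`, target `ℓ'`. -/
structure PTA (α L C P : Type*) where
  init : L
  acc : Set L
  edges : Set (L × Guard C P × α × Set C × L)
  finEdges : edges.Finite

/-- Reset of the clocks in `R` to `0`. -/
noncomputable def resetv {C : Type*} (μ : C → ℝ) (R : Set C) : C → ℝ :=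
  fun x => if x ∈ R then 0 else μ x

/-- `Steps A v ℓ μ τ w ℓ'`: from configuration (location `ℓ`, clock valuation `μ`,
absolute time `τ`) there is a run of `A[v]` reading the timed word `w` and ending in `ℓ'`. -/
inductive Steps {α L C P : Type*} (A : PTA α L C P) (v : P → ℚ≥0) :
    L → (C → ℝ) → ℝ → TWord α → L → Prop
  | refl (ℓ : L) (μ : C → ℝ) (τ : ℝ) : Steps A v ℓ μ τ [] ℓ
  | step {ℓ : L} {μ : C → ℝ} {τ : ℝ} {g : Guard C P} {a : α} {R : Set C} {ℓ' ℓ'' : L}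
      {d : ℝ} {w : TWord α}
      (hd : 0 ≤ d)
      (he : (ℓ, g, a, R, ℓ') ∈ A.edges)
      (hg : Guard.sat (fun x => μ x + d) v g)
      (h : Steps A v ℓ' (resetv (fun x => μ x + d) R) (τ + d) w ℓ'') :
      Steps A v ℓ μ τ ((a, τ + d) :: w) ℓ''

/-- The language `L(A[v])`: associated words of accepting runs that are timed words. -/
def lang {α L C P : Type*} (A : PTA α L C P) (v : P → ℚ≥0) : Set (TWord α) :=
  {w | IsTW w ∧ ∃ ℓ ∈ A.acc, Steps A v A.init (fun _ => 0) 0 w ℓ}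

/-- `A_ℓ`: the PTA `A` with accepting set `{ℓ}`. -/
def PTA.locAcc {α L C P : Type*} (A : PTA α L C P) (ℓ : L) : PTA α L C P :=
  { A with acc := {ℓ} }

/-- The match set `M(w, A)`. -/
def matchSet {α L C P : Type*} (w : TWord α) (A : PTA (Option α) L C P) :
    Set (ℝ × ℝ × (P → ℚ≥0)) :=
  {x | 0 ≤ x.1 ∧ x.1 < x.2.1 ∧ seg w x.1 x.2.1 ∈ lang A x.2.2}

/-- `V_{ℓ,n}`. -/
def Vset {α L C P : Type*} (A : PTA (Option α) L C P) (ℓ : L) (n : ℕ) :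
    Set (P → ℚ≥0) :=
  {v | ∃ v' : P → ℚ≥0,
    (ncatS (lang (A.locAcc ℓ) v) (TWl α) ∩
      ncatS (ncatS (TWln α n) (hatS (minusDollar (lang A v')))) (TWl α)).Nonempty}

/-- The KMP-style skip value `Δ_KMP(ℓ, V) = min {n ≥ 1 | V ⊆ V_{ℓ,n}}` (min ∅ = ⊤). -/
noncomputable def DeltaKMP {α L C P : Type*} (A : PTA (Option α) L C P) (ℓ : L)
    (V : Set (P → ℚ≥0)) : ℕ∞ :=
  sInf ((fun n : ℕ => (n : ℕ∞)) '' {n : ℕ | 1 ≤ n ∧ V ⊆ Vset A ℓ n})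

/-- The non-parametric KMP-style skip value `Δ'_KMP(ℓ) = min_v Δ_KMP(ℓ, {v})`. -/
noncomputable def DeltaKMP' {α L C P : Type*} (A : PTA (Option α) L C P) (ℓ : L) : ℕ∞ :=
  ⨅ v : P → ℚ≥0, DeltaKMP A ℓ {v}

/-- Untimed words over `Σ`, viewed inside `Σ ⊔ {$}`. -/
def pureW {α : Type*} (x : List (Option α)) : Prop := ∀ c ∈ x, c ≠ none

/-- `Σ^n · U` for sets of finite untimed words. -/
def catLen {α : Type*} (n : ℕ) (U : Set (List (Option α))) : Set (List (Option α)) :=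
  {y | ∃ x u, x.length = n ∧ pureW x ∧ u ∈ U ∧ y = x ++ u}

/-- `Σ^N a Σ*`: finite words of length at least `N+1` whose `(N+1)`-st letter is `a`. -/
def sigNa {α : Type*} (N : ℕ) (a : α) : Set (List (Option α)) :=
  {x | N + 1 ≤ x.length ∧ x[N]? = some (some a)}

/-- The Quick-Search-style skip value `Δ_QS(a)` (min ∅ = ⊤). -/
noncomputable def DeltaQS {α L C P : Type*} (A : PTA (Option α) L C P) (N : ℕ) (a : α) :
    ℕ∞ :=
  sInf ((fun n : ℕ => (n : ℕ∞)) '' {n : ℕ | 1 ≤ n ∧ ∃ v : P → ℚ≥0,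
    (sigNa N a ∩ catLen n (untimedS (minusDollar (lang A v)))).Nonempty})


lemma shift_shift {α : Type*} (w : TWord α) (s s' : ℝ) :
    shift (shift w s) s' = shift w (s + s') := by
  unfold shift
  rw [List.map_map]
  congr 1
  funext p
  simp [add_assoc]

lemma lastT_shift {α : Type*} {w : TWord α} (hw : w ≠ []) (s : ℝ) :
    lastT (shift w s) = lastT w + s := by
  unfold lastT shift
  rw [List.getLast?_map, List.getLast?_eq_getLast hw]
  simp

lemma shift_ne_nil {α : Type*} {w : TWord α} (hw : w ≠ []) (s : ℝ) :
    shift w s ≠ [] := by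
  unfold shift
  simpa using hw

lemma shift_append {α : Type*} (a b : TWord α) (s : ℝ) :
    shift (a ++ b) s = shift a s ++ shift b s :=
  List.map_append

lemma shift_ncat {α : Type*} {a : TWord α} (ha : a ≠ []) (b : TWord α) (t : ℝ) :
    shift (ncat a b) t = ncat (shift a t) b := by
  unfold ncat
  rw [shift_append, shift_shift, lastT_shift ha]

lemma ncat_ne_nil {α : Type*} {a : TWord α} (ha : a ≠ []) (b : TWord α) :
    ncat a b ≠ [] := by
  unfold ncat
  simp [ha]

/-- emptiness of the intersection with `T^n(Σ) · Ŷ · T(Σ)` is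
preserved when undoing a backward shift. -/
theorem statement17 {α : Type*} [Finite α] (n : ℕ) (hn : 1 ≤ n)
    (Y : Set (TWord α)) (hY : Y ⊆ TW α)
    (u : TWord α) (hu : IsTW u) (hne : u ≠ [])
    (t : ℝ) (ht0 : 0 ≤ t) (ht : t < tau u 1)
    (h : ncatS {shift u (-t)} (TW α) ∩ ncatS (ncatS (TWn α n) (hatS Y)) (TW α) = ∅) :
    ncatS {u} (TW α) ∩ ncatS (ncatS (TWn α n) (hatS Y)) (TW α) = ∅ := by
  rw [Set.eq_empty_iff_forall_notMem] at h ⊢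
  rintro w ⟨⟨u', hu', w₁, hw₁, heq⟩, ⟨xy, ⟨x, hx, y, hy, hxy⟩, z, hz, heq2⟩⟩
  rw [Set.mem_singleton_iff] at hu'
  subst hu' hxy
  -- x is nonempty
  have hxne : x ≠ [] := by
    intro hc
    rw [hc] at hx
    simp [TWn] at hx
    omega
  rcases List.exists_cons_of_ne_nil hne with ⟨pu, us, rfl⟩
  rcases List.exists_cons_of_ne_nil hxne with ⟨px, xs, rfl⟩
  -- first timestamps agree
  have hhead : pu = px := by
    have h1 : w.head? = some pu := by
      rw [heq]; unfold ncat; simp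
    have h2 : w.head? = some px := by
      rw [heq2]; unfold ncat; simp
    rw [h1] at h2
    exact Option.some_injective _ h2
  have htau : tau (pu :: us) 1 = pu.2 := by
    unfold tau lastT
    simp
  rw [htau] at ht
  -- every timestamp of x exceeds t
  have hxt : ∀ p ∈ px :: xs, t < p.2 := by
    intro p hp
    have hpair : (px :: xs).Pairwise (fun p q : α × ℝ => p.2 < q.2) := by
      haveI : IsTrans (α × ℝ) (fun p q : α × ℝ => p.2 < q.2) := ⟨fun _ _ _ => lt_trans⟩
      exact List.isChain_iff_pairwise.mp hx.1.2
    rcases List.mem_cons.mp hp with rfl | hp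
    · rw [← hhead]; exact ht
    · have := (List.pairwise_cons.mp hpair).1 p hp
      calc t < px.2 := by rw [← hhead]; exact ht
        _ < p.2 := this
  -- the shifted x is in TWn
  have hx' : shift (px :: xs) (-t) ∈ TWn α n := by
    constructor
    · constructor
      · intro p hp
        unfold shift at hp
        rcases List.mem_map.mp hp with ⟨q, hq, rfl⟩
        have := hxt q hq
        simp only
        linarith
      · unfold shift
        unfold List.Chain'
        rw [List.isChain_map]
        have := hx.1.2
        simpa [List.Chain'] using this
    · unfold shift
      rw [List.length_map]
      exact hx.2
  exact h (shift w (-t))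
    ⟨⟨shift ((pu :: us) : TWord α) (-t), rfl, w₁, hw₁, by
        rw [heq, shift_ncat (by simp)]⟩,
      ⟨ncat (shift (px :: xs) (-t)) y, ⟨shift (px :: xs) (-t), hx', y, hy, rfl⟩,
        z, hz, by
          rw [heq2, shift_ncat (ncat_ne_nil (by simp) y), shift_ncat (by simp)]⟩⟩

end PTPM
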